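/- Let α, β, γ, δ ∈ ℚ. There exists a ℚ-involution * on the first Weyl algebra A₁(ℚ) satisfying s* = α·s + β·t and t* = γ·s + δ·t if and only if α² + β·γ = 1 and δ = −α. -/
import Mathlib


/-- The defining relation of the first Weyl algebra: `s·t = t·s + 1`. -/
inductive weylRel : FreeAlgebra ℚ (Fin 2) → FreeAlgebra ℚ (Fin 2) → Prop
  | rel : weylRel (FreeAlgebra.ι ℚ 0 * FreeAlgebra.ι ℚ 1)
      (FreeAlgebra.ι ℚ 1 * FreeAlgebra.ι ℚ 0 + 1)

/-- The first Weyl algebra `A₁(ℚ) = ℚ⟨s, t : st - ts = 1⟩`. -/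
abbrev WeylAlg : Type := RingQuot weylRel

/-- The generator `s` of the first Weyl algebra. -/
noncomputable def Ws : WeylAlg := RingQuot.mkAlgHom ℚ weylRel (FreeAlgebra.ι ℚ 0)

/-- The generator `t` of the first Weyl algebra. -/
noncomputable def Wt : WeylAlg := RingQuot.mkAlgHom ℚ weylRel (FreeAlgebra.ι ℚ 1)

lemma weyl_comm : Ws * Wt = Wt * Ws + 1 := by
  have h := RingQuot.mkAlgHom_rel ℚ weylRel.rel
  simpa [Ws, Wt, map_mul, map_add, map_one] using h

open Polynomial in
/-- The standard representation of the Weyl algebra on `ℚ[X]`. -/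
noncomputable def weylRep : WeylAlg →ₐ[ℚ] Module.End ℚ (Polynomial ℚ) :=
  RingQuot.liftAlgHom ℚ ⟨FreeAlgebra.lift ℚ
      ![(Polynomial.derivative : Polynomial ℚ →ₗ[ℚ] Polynomial ℚ),
        LinearMap.mulLeft ℚ (Polynomial.X : Polynomial ℚ)], by
    rintro _ _ ⟨⟩
    simp only [map_mul, map_add, map_one, FreeAlgebra.lift_ι_apply]
    refine LinearMap.ext fun p => ?_
    simp only [Module.End.mul_apply, LinearMap.add_apply, Module.End.one_apply,
      LinearMap.mulLeft_apply, Matrix.cons_val_zero, Matrix.cons_val_one, Matrix.head_cons,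
      Polynomial.derivative_mul, Polynomial.derivative_X]
    ring⟩

lemma weylRep_Ws : weylRep Ws = (Polynomial.derivative : Polynomial ℚ →ₗ[ℚ] Polynomial ℚ) := by
  simp [weylRep, Ws, RingQuot.liftAlgHom_mkAlgHom_apply]

lemma weylRep_Wt : weylRep Wt = LinearMap.mulLeft ℚ (Polynomial.X : Polynomial ℚ) := by
  simp [weylRep, Wt, RingQuot.liftAlgHom_mkAlgHom_apply]

set_option maxHeartbeats 1000000 in
theorem linear_involutions_of_weyl_algebra (α β γ δ : ℚ) :
    (∃ invol : WeylAlg →ₗ[ℚ] WeylAlg,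
      (∀ a b : WeylAlg, invol (a * b) = invol b * invol a) ∧
      (∀ a : WeylAlg, invol (invol a) = a) ∧
      invol Ws = α • Ws + β • Wt ∧ invol Wt = γ • Ws + δ • Wt) ↔
    (α ^ 2 + β * γ = 1 ∧ δ = -α) := by
  constructor
  · rintro ⟨J, hmul, hinv, hs, ht⟩
    -- `J 1 = 1`
    have hone : J 1 = 1 := by
      conv_lhs => rw [← mul_one (J 1)]
      calc J 1 * 1 = J 1 * J (J 1) := by rw [hinv]
        _ = J (J 1 * 1) := (hmul _ _).symm
        _ = 1 := by rw [mul_one, hinv]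
    -- apply J to the Weyl relation
    have h1 : J (Ws * Wt) = J (Wt * Ws) + 1 := by
      rw [weyl_comm, map_add, hone]
    rw [hmul, hmul, hs, ht] at h1
    -- push to the representation and evaluate at the polynomial 1
    have h2 := congrArg (fun x => (weylRep x) (1 : Polynomial ℚ)) h1
    simp only [map_add, map_mul, map_smul, weylRep_Ws, weylRep_Wt, LinearMap.add_apply,
      LinearMap.smul_apply, Module.End.mul_apply, LinearMap.mulLeft_apply, Module.End.one_apply,
      Polynomial.derivative_one, mul_one, map_zero, smul_zero, zero_add, add_zero,
      Polynomial.derivative_X, Polynomial.derivative_smul] at h2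
    have hdet : β * γ = α * δ + 1 := by
      have := congrArg (fun p => Polynomial.coeff p 0) h2
      simp [Polynomial.coeff_smul, mul_comm] at this
      linarith [this]
    -- involutivity on Ws and Wt
    have h3 : α • (α • Ws + β • Wt) + β • (γ • Ws + δ • Wt) = Ws := by
      have := hinv Ws
      rw [hs, map_add, map_smul, map_smul, hs, ht] at this
      exact this
    have h4 : γ • (α • Ws + β • Wt) + δ • (γ • Ws + δ • Wt) = Wt := by
      have := hinv Wt
      rw [ht, map_add, map_smul, map_smul, hs, ht] at this
      exact this
    have e3 := congrArg (fun x => (weylRep x) (Polynomial.X : Polynomial ℚ)) h3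
    have e4 := congrArg (fun x => (weylRep x) (Polynomial.X : Polynomial ℚ)) h4
    simp only [map_add, map_smul, weylRep_Ws, weylRep_Wt, LinearMap.add_apply,
      LinearMap.smul_apply, LinearMap.mulLeft_apply, Polynomial.derivative_X] at e3 e4
    have c3 : α ^ 2 + β * γ = 1 := by
      have := congrArg (fun p => Polynomial.coeff p 0) e3
      simp [Polynomial.coeff_smul, Polynomial.coeff_one] at this
      nlinarith [this]
    have c4 : γ * β + δ ^ 2 = 1 := by
      have := congrArg (fun p => Polynomial.coeff p 2) e4
      simp [Polynomial.coeff_smul, Polynomial.coeff_one] at this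
      nlinarith [this]
    refine ⟨c3, ?_⟩
    have hsq : (α + δ) ^ 2 = 0 := by nlinarith
    have := pow_eq_zero_iff (n := 2) (by norm_num) |>.mp hsq
    linarith
  · rintro ⟨hα, rfl⟩
    -- construct the involution
    set S' : WeylAlg := α • Ws + β • Wt with hS'
    set T' : WeylAlg := γ • Ws + (-α) • Wt with hT'
    have key : T' * S' = S' * T' + 1 := by
      rw [hS', hT']
      simp only [add_mul, mul_add, smul_mul_assoc, mul_smul_comm, smul_smul]
      rw [weyl_comm]
      match_scalars <;> simp <;> nlinarith [hα]
    have frel : ∀ ⦃x y⦄, weylRel x y →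
        (FreeAlgebra.lift ℚ ![MulOpposite.op S', MulOpposite.op T']) x =
        (FreeAlgebra.lift ℚ ![MulOpposite.op S', MulOpposite.op T']) y := by
      rintro _ _ ⟨⟩
      simp only [map_mul, map_add, map_one, FreeAlgebra.lift_ι_apply]
      show MulOpposite.op S' * MulOpposite.op T' = MulOpposite.op T' * MulOpposite.op S' + 1
      rw [← MulOpposite.op_mul, ← MulOpposite.op_mul, ← MulOpposite.op_one,
        ← MulOpposite.op_add, key]
    set f : WeylAlg →ₐ[ℚ] (WeylAlg)ᵐᵒᵖ :=
      RingQuot.liftAlgHom ℚ ⟨FreeAlgebra.lift ℚ ![MulOpposite.op S', MulOpposite.op T'], frel⟩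
      with hf
    have fWs : f Ws = MulOpposite.op S' := by
      simp [hf, Ws, RingQuot.liftAlgHom_mkAlgHom_apply]
    have fWt : f Wt = MulOpposite.op T' := by
      simp [hf, Wt, RingQuot.liftAlgHom_mkAlgHom_apply]
    set J : WeylAlg →ₗ[ℚ] WeylAlg :=
      (MulOpposite.opLinearEquiv ℚ).symm.toLinearMap ∘ₗ f.toLinearMap with hJ
    have Japply : ∀ a, J a = (f a).unop := fun a => rfl
    have Jmul : ∀ a b : WeylAlg, J (a * b) = J b * J a := by
      intro a b
      simp only [Japply, map_mul, MulOpposite.unop_mul]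
    have JWs : J Ws = S' := by rw [Japply, fWs]; rfl
    have JWt : J Wt = T' := by rw [Japply, fWt]; rfl
    have JJWs : J (J Ws) = Ws := by
      rw [JWs, hS', map_add, map_smul, map_smul, JWs, JWt, hS', hT']
      match_scalars <;> simp <;> nlinarith [hα]
    have JJWt : J (J Wt) = Wt := by
      rw [JWt, hT', map_add, map_smul, map_smul, JWs, JWt, hS', hT']
      match_scalars <;> simp <;> nlinarith [hα]
    have Jone : J 1 = 1 := by
      rw [Japply, map_one]; rfl
    -- J ∘ J is an algebra homomorphism equal to the identity
    have JJ : ∀ a, J (J a) = a := by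
      let g : WeylAlg →ₐ[ℚ] WeylAlg :=
      { toFun := fun a => J (J a)
        map_one' := by show J (J 1) = 1; rw [Jone, Jone]
        map_mul' := fun a b => by
          show J (J (a * b)) = J (J a) * J (J b)
          rw [Jmul, Jmul]
        map_zero' := by simp
        map_add' := fun a b => by simp
        commutes' := fun r => by
          show J (J (algebraMap ℚ WeylAlg r)) = algebraMap ℚ WeylAlg r
          rw [Algebra.algebraMap_eq_smul_one, map_smul, map_smul, Jone, Jone] }
      have hg : g = AlgHom.id ℚ WeylAlg := by
        apply RingQuot.ringQuot_ext'
        apply FreeAlgebra.hom_ext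
        funext i
        fin_cases i
        · simpa [g, Ws] using JJWs
        · simpa [g, Wt] using JJWt
      intro a
      exact AlgHom.congr_fun hg a
    exact ⟨J, Jmul, JJ, by rw [JWs], by rw [JWt]⟩
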